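/- For any graph G, the limit as x → ∞ of Σ_{1 ≤ n_1 ≤ x} ⋯ Σ_{1 ≤ n_e ≤ x} |μ(n_1)⋯μ(n_e)| · ∏_{r=1}^{v} 1/N_r is finite; that is, the series Σ over all edge numberings of G of |μ(n_1)⋯μ(n_e)| ∏_{r=1}^{v} 1/N_r converges. -/

import Mathlib

open scoped BigOperators Classical

noncomputable section

/-- The vertex numbering `N_r` associated to an edge numbering `n` of the graph with
vertex set `Fin v` and edge set `E`: the lcm of `n a` over the edges `a` incident to `r`
(equal to `1` if `r` is isolated). -/
def vertexNum (v : ℕ) (E : Finset (Sym2 (Fin v))) (n : {a : Sym2 (Fin v) // a ∈ E} → ℕ+)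
    (r : Fin v) : ℕ :=
  (E.attach.filter fun a => r ∈ a.1).lcm fun a => (n a : ℕ)

/-!
Only squarefree edge numberings contribute, and such a numbering `n` is determined by the
sets `S_p = {a | p ∣ n_a}`, `p` prime. Every vertex covered by `S_p` has `p ∣ N_r`, so
`∏_r N_r ≥ ∏_p p ^ c(S_p)`, where `c(S)` is the number of vertices covered by `S`; as there are
no loops, `c(S) ≥ 2` unless `S = ∅`. Hence every finite partial sum is at most
`∏_p ∑_S p ^ (-c(S)) ≤ ∏_p (1 + 2^e / p^2) ≤ exp (2^e ζ(2))`.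
-/

open Finset

theorem Finset.sum_prod_le_prod_sum_of_injOn {α κ β R : Type*} [Fintype β]
    [CommSemiring R] [PartialOrder R] [IsOrderedRing R]
    {u : Finset α} {s : Finset κ} {φ : α → κ → β} (hφ : Set.InjOn (fun x => s.restrict (φ x)) u)
    {g : κ → β → R} (hg : ∀ k b, 0 ≤ g k b) :
    ∑ x ∈ u, ∏ k ∈ s, g k (φ x k) ≤ ∏ k ∈ s, ∑ b, g k b := by
  simp only [← prod_coe_sort s]
  rw [Fintype.prod_sum]
  calc ∑ x ∈ u, ∏ k : s, g k (φ x k)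
      = ∑ F ∈ u.image fun x => s.restrict (φ x), ∏ k : s, g k (F k) :=
        (sum_image (f := fun F : s → β => ∏ k : s, g k (F k)) hφ).symm
    _ ≤ ∑ F : s → β, ∏ k : s, g k (F k) :=
        sum_le_univ_sum_of_nonneg fun F => prod_nonneg fun k _ => hg k (F k)

theorem Nat.prod_primes_pow_card_dvd_prod {ι : Type*} [Fintype ι] (N : ι → ℕ)
    {Q : Finset ℕ} (hQ : ∀ p ∈ Q, p.Prime) :
    ∏ p ∈ Q, p ^ #{r | p ∣ N r} ∣ ∏ r, N r := by
  calc ∏ p ∈ Q, p ^ #{r | p ∣ N r} = ∏ r, ∏ p ∈ Q with p ∣ N r, p := by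
        simp_rw [← prod_const]
        exact prod_comm' fun p r => by simp [and_comm]
    _ ∣ ∏ r, N r := prod_dvd_prod_of_dvd _ _ fun r _ =>
        prod_primes_dvd _ (fun p hp => (hQ p (mem_filter.1 hp).1).prime)
          fun p hp => (mem_filter.1 hp).2

theorem sum_inv_pow_le_one_add {ι : Type*} [Fintype ι] {c : Finset ι → ℕ}
    (hc : ∀ S : Finset ι, S.Nonempty → 2 ≤ c S) {x : ℝ} (hx : 1 ≤ x) :
    ∑ S : Finset ι, (x ^ c S)⁻¹ ≤ 1 + 2 ^ Fintype.card ι * (x ^ 2)⁻¹ := by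
  have hterm : ∀ S : Finset ι, (x ^ c S)⁻¹ ≤ (if S = ∅ then 1 else 0) + (x ^ 2)⁻¹ := by
    intro S
    split_ifs with hS
    · have : (x ^ c S)⁻¹ ≤ 1 := inv_le_one_of_one_le₀ (one_le_pow₀ hx)
      linarith [inv_nonneg.2 (pow_nonneg (zero_le_one.trans hx) 2)]
    · rw [zero_add]
      exact inv_anti₀ (by positivity) (pow_le_pow_right₀ hx (hc S (nonempty_iff_ne_empty.2 hS)))
  calc ∑ S : Finset ι, (x ^ c S)⁻¹ ≤ ∑ S : Finset ι, ((if S = ∅ then 1 else 0) + (x ^ 2)⁻¹) :=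
        sum_le_sum fun S _ => hterm S
    _ = 1 + 2 ^ Fintype.card ι * (x ^ 2)⁻¹ := by
        simp [sum_add_distrib, Fintype.card_finset]

theorem prod_sum_inv_pow_le_exp {ι : Type*} [Fintype ι] {c : Finset ι → ℕ}
    (hc : ∀ S : Finset ι, S.Nonempty → 2 ≤ c S) {Q : Finset ℕ} (hQ : 0 ∉ Q) :
    ∏ p ∈ Q, ∑ S : Finset ι, ((p : ℝ) ^ c S)⁻¹ ≤
      Real.exp (2 ^ Fintype.card ι * ∑' m : ℕ, ((m : ℝ) ^ 2)⁻¹) := by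
  calc ∏ p ∈ Q, ∑ S : Finset ι, ((p : ℝ) ^ c S)⁻¹
        ≤ ∏ p ∈ Q, (1 + 2 ^ Fintype.card ι * ((p : ℝ) ^ 2)⁻¹) :=
          prod_le_prod (fun p _ => sum_nonneg fun S _ => by positivity) fun p hp =>
            sum_inv_pow_le_one_add hc <|
              Nat.one_le_cast.2 (Nat.pos_of_ne_zero (ne_of_mem_of_not_mem hp hQ))
      _ ≤ Real.exp (∑ p ∈ Q, 2 ^ Fintype.card ι * ((p : ℝ) ^ 2)⁻¹) :=
          Real.prod_one_add_le_exp_sum Q fun p => by positivity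
      _ ≤ Real.exp (2 ^ Fintype.card ι * ∑' m : ℕ, ((m : ℝ) ^ 2)⁻¹) := by
          rw [← mul_sum]
          gcongr
          exact (Real.summable_nat_pow_inv.2 one_lt_two).sum_le_tsum Q fun m _ => by positivity

theorem abs_prod_moebius {ι : Type*} [Fintype ι] (n : ι → ℕ) :
    |∏ a, (ArithmeticFunction.moebius (n a) : ℝ)| = if ∀ a, Squarefree (n a) then 1 else 0 := by
  simp [abs_prod, ← Int.cast_abs, ArithmeticFunction.abs_moebius, prod_boole]

def dvdIndices {ι : Type*} [Fintype ι] (n : ι → ℕ+) (p : ℕ) : Finset ι := {a | p ∣ (n a : ℕ)}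

theorem injOn_dvdIndices {ι : Type*} [Fintype ι] (Q : Finset ℕ) :
    Set.InjOn (fun n => Q.restrict (dvdIndices n))
      {n : ι → ℕ+ | ∀ a, Squarefree (n a : ℕ) ∧ (n a : ℕ).primeFactors ⊆ Q} := by
  intro n hn m hm h
  funext a
  refine PNat.coe_injective <| (Nat.Squarefree.ext_iff (hn a).1 (hm a).1).2 fun p hp => ?_
  by_cases hpQ : p ∈ Q
  · simpa [dvdIndices] using Finset.ext_iff.1 (congrFun h ⟨p, hpQ⟩) a
  · have hdvd (k : ℕ+) (hk : k.val.primeFactors ⊆ Q) : ¬ p ∣ k :=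
      fun hpk => hpQ (hk (Nat.mem_primeFactors.2 ⟨hp, hpk, k.ne_zero⟩))
    exact iff_of_false (hdvd _ (hn a).2) (hdvd _ (hm a).2)

def coveredVertices {α : Type*} [DecidableEq α] {E : Finset (Sym2 α)}
    (S : Finset {a // a ∈ E}) : Finset α :=
  S.biUnion fun a => a.1.toFinset

theorem two_le_card_coveredVertices {α : Type*} [DecidableEq α] {E : Finset (Sym2 α)}
    (hE : ∀ a ∈ E, ¬ a.IsDiag) {S : Finset {a // a ∈ E}} (hS : S.Nonempty) :
    2 ≤ #(coveredVertices S) := by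
  obtain ⟨a, ha⟩ := hS
  calc 2 = #a.1.toFinset := (Sym2.card_toFinset_of_not_isDiag _ (hE _ a.2)).symm
    _ ≤ #(coveredVertices S) := card_le_card (subset_biUnion_of_mem (fun a => a.1.toFinset) ha)

section Graph

variable {v : ℕ} {E : Finset (Sym2 (Fin v))}

theorem vertexNum_pos (n : {a // a ∈ E} → ℕ+) (r : Fin v) : 0 < vertexNum v E n r := by
  refine Nat.pos_of_ne_zero fun h => ?_
  obtain ⟨a, -, ha⟩ := lcm_eq_zero_iff.1 h
  exact (n a).ne_zero ha

theorem dvd_vertexNum (n : {a // a ∈ E} → ℕ+) {a : {a // a ∈ E}} {r : Fin v} (hr : r ∈ a.1) :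
    (n a : ℕ) ∣ vertexNum v E n r :=
  dvd_lcm (by simp [hr])

theorem coveredVertices_dvdIndices_subset (n : {a // a ∈ E} → ℕ+) (p : ℕ) :
    coveredVertices (dvdIndices n p) ⊆ ({r | p ∣ vertexNum v E n r} : Finset (Fin v)) := by
  intro r hr
  obtain ⟨a, ha, hra⟩ := mem_biUnion.1 hr
  exact mem_filter.2 ⟨mem_univ r,
    (mem_filter.1 ha).2.trans (dvd_vertexNum n (Sym2.mem_toFinset.1 hra))⟩

theorem prod_inv_vertexNum_le (n : {a // a ∈ E} → ℕ+) {Q : Finset ℕ} (hQ : ∀ p ∈ Q, p.Prime) :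
    ∏ r, 1 / (vertexNum v E n r : ℝ) ≤
      ∏ p ∈ Q, ((p : ℝ) ^ #(coveredVertices (dvdIndices n p)))⁻¹ := by
  have hdvd : ∏ p ∈ Q, p ^ #(coveredVertices (dvdIndices n p)) ∣ ∏ r, vertexNum v E n r :=
    (prod_dvd_prod_of_dvd _ _ fun p _ =>
      pow_dvd_pow p (card_le_card (coveredVertices_dvdIndices_subset n p))).trans
      (Nat.prod_primes_pow_card_dvd_prod _ hQ)
  have hle := Nat.le_of_dvd (prod_pos fun r _ => vertexNum_pos n r) hdvd
  simp only [one_div, prod_inv_distrib]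
  refine inv_anti₀ (prod_pos fun p hp => pow_pos (Nat.cast_pos.2 (hQ p hp).pos) _) ?_
  exact_mod_cast hle

end Graph

/-- The series, over all edge numberings `(n_a)` of the graph, of
`|μ(n_1) ⋯ μ(n_e)| ∏_{r=1}^{v} 1 / N_r` converges. -/
theorem stmt8 (v : ℕ) (E : Finset (Sym2 (Fin v))) (hE : ∀ a ∈ E, ¬ a.IsDiag) :
    Summable fun n : {a : Sym2 (Fin v) // a ∈ E} → ℕ+ =>
      |∏ a, (ArithmeticFunction.moebius (n a : ℕ) : ℝ)| *
        ∏ r, 1 / (vertexNum v E n r : ℝ) := by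
  refine summable_of_sum_le
    (c := Real.exp (2 ^ Fintype.card {a // a ∈ E} * ∑' m : ℕ, ((m : ℝ) ^ 2)⁻¹))
    (fun n => by positivity) fun u => ?_
  set Q := u.biUnion fun n => univ.biUnion fun a => (n a : ℕ).primeFactors
  have hQ : ∀ p ∈ Q, p.Prime := by
    simp only [Q, mem_biUnion]
    rintro p ⟨n, -, a, -, hp⟩
    exact Nat.prime_of_mem_primeFactors hp
  have hQ_supp : ∀ n ∈ u, ∀ a, (n a : ℕ).primeFactors ⊆ Q := by
    intro n hn a p hp
    simp only [Q, mem_biUnion]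
    exact ⟨n, hn, a, mem_univ a, hp⟩
  calc ∑ n ∈ u, |∏ a, (ArithmeticFunction.moebius (n a : ℕ) : ℝ)| *
        ∏ r, 1 / (vertexNum v E n r : ℝ)
      = ∑ n ∈ u with ∀ a, Squarefree (n a : ℕ), ∏ r, 1 / (vertexNum v E n r : ℝ) := by
        simp only [abs_prod_moebius, ite_mul, one_mul, zero_mul, sum_filter]
    _ ≤ ∑ n ∈ u with ∀ a, Squarefree (n a : ℕ),
          ∏ p ∈ Q, ((p : ℝ) ^ #(coveredVertices (dvdIndices n p)))⁻¹ :=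
        sum_le_sum fun n _ => prod_inv_vertexNum_le n hQ
    _ ≤ ∏ p ∈ Q, ∑ S, ((p : ℝ) ^ #(coveredVertices S))⁻¹ := by
        refine sum_prod_le_prod_sum_of_injOn
          (g := fun p S => ((p : ℝ) ^ #(coveredVertices S))⁻¹)
          ((injOn_dvdIndices Q).mono fun n hn a => ?_) fun p S => by positivity
        rw [coe_filter] at hn
        exact ⟨hn.2 a, hQ_supp n hn.1 a⟩
    _ ≤ Real.exp (2 ^ Fintype.card {a // a ∈ E} * ∑' m : ℕ, ((m : ℝ) ^ 2)⁻¹) :=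
        prod_sum_inv_pow_le_exp
          (fun S => two_le_card_coveredVertices hE) (fun h0 => Nat.not_prime_zero (hQ 0 h0))
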